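/- arXiv:2604.06909 — 2 statements merged into one kernel-verified Lean document; each statement's English description precedes it below -/
import Mathlib

section
/- Consider the mini-batch stochastic Krasnosel'skiĭ–Mann iteration x_{k+1} = (1 - α_k)x_k + α_k T_ξ̄_k(x_k) with α_k ∈ (0,1), where T_ξ̄_k is unbiased for a nonexpansive mapping T with conditional variance at most σ²/b_k. Then for every fixed point x* of T: E[‖x_{k+1} - x*‖² | past] ≤ ‖x_k - x*‖² + σ²α_k/b_k - α_k(1 - α_k)‖x_k - T(x_k)‖². -/
/-!
With `x_{k+1} - x* = (1 - α)(x_k - x*) + α(U - x*)`, the convex-combination identity for `‖·‖²`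
and the bias–variance decomposition `E‖U - c‖² = Var U + ‖T x_k - c‖²` give the exact value
`E‖x_{k+1} - x*‖² = (1 - α)‖x_k - x*‖² + α‖T x_k - x*‖² + α² Var U - α(1 - α)‖x_k - T x_k‖²`.
Nonexpansiveness at the fixed point gives `‖T x_k - x*‖ ≤ ‖x_k - x*‖`, and `α² Var U ≤ α σ² / b_k`.
-/

open Finset
open scoped InnerProductSpace

section

variable {E : Type*} [NormedAddCommGroup E] [InnerProductSpace ℝ E]

theorem norm_sub_smul_add_smul_sq (u v : E) (α : ℝ) :
    ‖(1 - α) • u + α • v‖ ^ 2 = (1 - α) * ‖u‖ ^ 2 + α * ‖v‖ ^ 2 - α * (1 - α) * ‖u - v‖ ^ 2 := by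
  simp only [← real_inner_self_eq_norm_sq, inner_add_add_self, inner_sub_sub_self,
    real_inner_smul_left, real_inner_smul_right]
  ring

variable {Ω : Type*} [Fintype Ω] {q : Ω → ℝ}

theorem sum_mul_norm_sub_sq_eq_add_of_sum_smul_eq (hq1 : ∑ ω, q ω = 1) {U : Ω → E} {m : E}
    (hm : ∑ ω, q ω • U ω = m) (c : E) :
    ∑ ω, q ω * ‖U ω - c‖ ^ 2 = ∑ ω, q ω * ‖U ω - m‖ ^ 2 + ‖m - c‖ ^ 2 := by
  have hcentered : ∑ ω, q ω • (U ω - m) = 0 := by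
    simp only [smul_sub, sum_sub_distrib, hm, ← sum_smul, hq1, one_smul, sub_self]
  have hcross : ∑ ω, q ω * ⟪U ω - m, m - c⟫_ℝ = 0 := by
    simp only [← real_inner_smul_left, ← sum_inner, hcentered, inner_zero_left]
  calc ∑ ω, q ω * ‖U ω - c‖ ^ 2
      = ∑ ω, (q ω * ‖U ω - m‖ ^ 2 + 2 * (q ω * ⟪U ω - m, m - c⟫_ℝ) + q ω * ‖m - c‖ ^ 2) := by
        refine sum_congr rfl fun ω _ => ?_
        rw [← sub_add_sub_cancel (U ω) m c, norm_add_sq_real]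
        ring
    _ = ∑ ω, q ω * ‖U ω - m‖ ^ 2 + ‖m - c‖ ^ 2 := by
        rw [sum_add_distrib, sum_add_distrib, ← mul_sum, hcross, ← sum_mul, hq1]
        ring

theorem sum_mul_norm_averaged_step_sub_sq (hq1 : ∑ ω, q ω = 1) {U : Ω → E} {m : E}
    (hm : ∑ ω, q ω • U ω = m) (x c : E) (α : ℝ) :
    ∑ ω, q ω * ‖(1 - α) • x + α • U ω - c‖ ^ 2
      = (1 - α) * ‖x - c‖ ^ 2 + α * ‖m - c‖ ^ 2 + α ^ 2 * ∑ ω, q ω * ‖U ω - m‖ ^ 2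
          - α * (1 - α) * ‖x - m‖ ^ 2 := by
  have hstep : ∀ ω, ‖(1 - α) • x + α • U ω - c‖ ^ 2
      = (1 - α) * ‖x - c‖ ^ 2 + α * ‖U ω - c‖ ^ 2 - α * (1 - α) * ‖U ω - x‖ ^ 2 := fun ω => by
    have h := norm_sub_smul_add_smul_sq (x - c) (U ω - c) α
    rw [sub_sub_sub_cancel_right, norm_sub_rev x (U ω)] at h
    rw [← h]
    congr 2
    module
  simp only [hstep]
  have hsplit : ∀ ω,
      q ω * ((1 - α) * ‖x - c‖ ^ 2 + α * ‖U ω - c‖ ^ 2 - α * (1 - α) * ‖U ω - x‖ ^ 2) =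
        (1 - α) * ‖x - c‖ ^ 2 * q ω + α * (q ω * ‖U ω - c‖ ^ 2)
          - α * (1 - α) * (q ω * ‖U ω - x‖ ^ 2) := fun ω => by ring
  simp only [hsplit, sum_sub_distrib, sum_add_distrib, ← mul_sum, hq1]
  rw [sum_mul_norm_sub_sq_eq_add_of_sum_smul_eq hq1 hm c,
    sum_mul_norm_sub_sq_eq_add_of_sum_smul_eq hq1 hm x, norm_sub_rev m x]
  ring

end

theorem km_one_step_descent_general
    {d : ℕ} {Ω : Type*} [Fintype Ω]
    (T : EuclideanSpace ℝ (Fin d) → EuclideanSpace ℝ (Fin d))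
    (hT : ∀ x y, ‖T x - T y‖ ≤ ‖x - y‖)
    (q : Ω → ℝ) (hq : ∀ ω, 0 ≤ q ω) (hq1 : ∑ ω, q ω = 1)
    (xk : EuclideanSpace ℝ (Fin d)) (U : Ω → EuclideanSpace ℝ (Fin d))
    (hunb : ∑ ω, q ω • U ω = T xk)
    (σ bk : ℝ)
    (hvar : ∑ ω, q ω * ‖U ω - T xk‖ ^ 2 ≤ σ ^ 2 / bk)
    (α : ℝ) (hα : α ∈ Set.Ioo (0 : ℝ) 1)
    (xnext : Ω → EuclideanSpace ℝ (Fin d))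
    (hx : ∀ ω, xnext ω = (1 - α) • xk + α • U ω)
    (xs : EuclideanSpace ℝ (Fin d)) (hxs : T xs = xs) :
    ∑ ω, q ω * ‖xnext ω - xs‖ ^ 2
      ≤ ‖xk - xs‖ ^ 2 + σ ^ 2 * α / bk - α * (1 - α) * ‖xk - T xk‖ ^ 2 := by
  obtain ⟨hα0, hα1⟩ := hα
  have hfix : ‖T xk - xs‖ ^ 2 ≤ ‖xk - xs‖ ^ 2 := by
    have h := hT xk xs
    rw [hxs] at h
    gcongr
  have hvar0 : 0 ≤ ∑ ω, q ω * ‖U ω - T xk‖ ^ 2 :=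
    sum_nonneg fun ω _ => mul_nonneg (hq ω) (sq_nonneg _)
  simp only [hx, sum_mul_norm_averaged_step_sub_sq hq1 hunb]
  have hσ : σ ^ 2 * α / bk = α * (σ ^ 2 / bk) := by ring
  linarith [mul_le_mul_of_nonneg_left hfix hα0.le, mul_le_mul_of_nonneg_left hvar hα0.le,
    mul_nonneg (mul_nonneg hα0.le (sub_nonneg.2 hα1.le)) hvar0]

/-- One-step descent inequality of the mini-batch stochastic Krasnosel'skiĭ–Mann
iteration. `U ω` stands for `T_ξ̄ₖ(xₖ)`, with outcomes `ω` of probability `q ω`;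
the conditional expectation given the past is the sum `∑ ω, q ω * ·`. -/
theorem km_one_step_descent
    {d : ℕ} {Ω : Type*} [Fintype Ω]
    (T : EuclideanSpace ℝ (Fin d) → EuclideanSpace ℝ (Fin d))
    (hT : ∀ x y, ‖T x - T y‖ ≤ ‖x - y‖)
    (q : Ω → ℝ) (hq : ∀ ω, 0 ≤ q ω) (hq1 : ∑ ω, q ω = 1)
    (xk : EuclideanSpace ℝ (Fin d)) (U : Ω → EuclideanSpace ℝ (Fin d))
    (hunb : ∑ ω, q ω • U ω = T xk)
    (σ bk : ℝ) (hbk : 0 < bk)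
    (hvar : ∑ ω, q ω * ‖U ω - T xk‖ ^ 2 ≤ σ ^ 2 / bk)
    (α : ℝ) (hα : α ∈ Set.Ioo (0 : ℝ) 1)
    (xnext : Ω → EuclideanSpace ℝ (Fin d))
    (hx : ∀ ω, xnext ω = (1 - α) • xk + α • U ω)
    (xs : EuclideanSpace ℝ (Fin d)) (hxs : T xs = xs) :
    ∑ ω, q ω * ‖xnext ω - xs‖ ^ 2
      ≤ ‖xk - xs‖ ^ 2 + σ ^ 2 * α / bk - α * (1 - α) * ‖xk - T xk‖ ^ 2 :=
  km_one_step_descent_general T hT q hq hq1 xk U hunb σ bk hvar α hα xnext hx xs hxs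
end

section
/- Consider the iteration x_{k+1} = (1 - α_k)x_k + α_k T_ξ̄_k(x_k) with α_k ∈ (0,1), where T is nonexpansive, T_ξ̄_k is unbiased for T with conditional variance at most σ²/b_k. Then E[‖x_{k+1} - T(x_{k+1})‖ | past] ≤ ‖x_k - T(x_k)‖ + 2σ/√(b_k). -/
/-- One-step residual inequality: `E[‖x_{k+1} - T(x_{k+1})‖ | past] ≤ ‖x_k - T(x_k)‖ + 2σ/√b_k`.
`U ω` stands for `T_ξ̄ₖ(xₖ)`, with outcomes `ω` of probability `q ω`. -/
theorem km_one_step_residual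
    {d : ℕ} {Ω : Type*} [Fintype Ω]
    (T : EuclideanSpace ℝ (Fin d) → EuclideanSpace ℝ (Fin d))
    (hT : ∀ x y, ‖T x - T y‖ ≤ ‖x - y‖)
    (q : Ω → ℝ) (hq : ∀ ω, 0 ≤ q ω) (hq1 : ∑ ω, q ω = 1)
    (xk : EuclideanSpace ℝ (Fin d)) (U : Ω → EuclideanSpace ℝ (Fin d))
    (hunb : ∑ ω, q ω • U ω = T xk)
    (σ bk : ℝ) (hσ : 0 ≤ σ) (hbk : 0 < bk)
    (hvar : ∑ ω, q ω * ‖U ω - T xk‖ ^ 2 ≤ σ ^ 2 / bk)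
    (α : ℝ) (hα : α ∈ Set.Ioo (0 : ℝ) 1)
    (xnext : Ω → EuclideanSpace ℝ (Fin d))
    (hx : ∀ ω, xnext ω = (1 - α) • xk + α • U ω) :
    ∑ ω, q ω * ‖xnext ω - T (xnext ω)‖
      ≤ ‖xk - T xk‖ + 2 * σ / Real.sqrt bk := by
  obtain ⟨hα0, hα1⟩ := hα
  set a : Ω → ℝ := fun ω => ‖U ω - T xk‖ with ha
  have ha0 : ∀ ω, 0 ≤ a ω := fun ω => norm_nonneg _
  set R : ℝ := ‖xk - T xk‖ with hR
  -- pointwise residual bound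
  have hpt : ∀ ω, ‖xnext ω - T (xnext ω)‖ ≤ R + 2 * α * a ω := by
    intro ω
    have h1 : ‖xnext ω - T (xnext ω)‖ ≤ ‖xnext ω - T xk‖ + ‖T xk - T (xnext ω)‖ :=
      norm_sub_le_norm_sub_add_norm_sub _ _ _
    have h2 : ‖T xk - T (xnext ω)‖ ≤ ‖xk - xnext ω‖ := hT _ _
    have e1 : xnext ω - T xk = (1 - α) • (xk - T xk) + α • (U ω - T xk) := by
      rw [hx ω]; module
    have e2 : xk - xnext ω = α • (xk - T xk) + α • (T xk - U ω) := by
      rw [hx ω]; module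
    have h3 : ‖xnext ω - T xk‖ ≤ (1 - α) * R + α * a ω := by
      rw [e1]
      refine (norm_add_le _ _).trans ?_
      rw [norm_smul, norm_smul, Real.norm_eq_abs, Real.norm_eq_abs,
        abs_of_nonneg (by linarith), abs_of_nonneg hα0.le]
    have h4 : ‖xk - xnext ω‖ ≤ α * R + α * a ω := by
      rw [e2]
      refine (norm_add_le _ _).trans ?_
      rw [norm_smul, norm_smul, Real.norm_eq_abs, abs_of_nonneg hα0.le,
        norm_sub_rev (T xk)]
    have := h1.trans (add_le_add h3 (h2.trans h4))
    linarith
  -- Jensen / Cauchy-Schwarz step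
  have hS : ∑ ω, q ω * a ω ≤ σ / Real.sqrt bk := by
    have hcs := Real.sum_mul_le_sqrt_mul_sqrt Finset.univ
      (fun ω => Real.sqrt (q ω)) (fun ω => Real.sqrt (q ω) * a ω)
    have e3 : ∀ ω : Ω, Real.sqrt (q ω) * (Real.sqrt (q ω) * a ω) = q ω * a ω := by
      intro ω
      rw [← mul_assoc, Real.mul_self_sqrt (hq ω)]
    have e4 : ∀ ω : Ω, Real.sqrt (q ω) ^ 2 = q ω := fun ω => Real.sq_sqrt (hq ω)
    have e5 : ∀ ω : Ω, (Real.sqrt (q ω) * a ω) ^ 2 = q ω * a ω ^ 2 := by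
      intro ω; rw [mul_pow, e4]
    simp only [e3, e4, e5, hq1, Real.sqrt_one, one_mul] at hcs
    refine hcs.trans ?_
    have h6 : Real.sqrt (∑ ω, q ω * a ω ^ 2) ≤ Real.sqrt (σ ^ 2 / bk) :=
      Real.sqrt_le_sqrt hvar
    calc Real.sqrt (∑ ω, q ω * a ω ^ 2) ≤ Real.sqrt (σ ^ 2 / bk) := h6
      _ = σ / Real.sqrt bk := by
          rw [Real.sqrt_div (sq_nonneg σ), Real.sqrt_sq hσ]
  have hsum : ∑ ω, q ω * ‖xnext ω - T (xnext ω)‖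
      ≤ ∑ ω, q ω * (R + 2 * α * a ω) := by
    refine Finset.sum_le_sum fun ω _ => mul_le_mul_of_nonneg_left (hpt ω) (hq ω)
  refine hsum.trans ?_
  have : ∑ ω, q ω * (R + 2 * α * a ω)
      = R * (∑ ω, q ω) + 2 * α * ∑ ω, q ω * a ω := by
    rw [Finset.mul_sum, Finset.mul_sum, ← Finset.sum_add_distrib]
    congr 1; ext ω; ring
  rw [this, hq1, mul_one]
  have hS0 : 0 ≤ ∑ ω, q ω * a ω :=
    Finset.sum_nonneg fun ω _ => mul_nonneg (hq ω) (ha0 ω)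
  have h7 : 2 * α * ∑ ω, q ω * a ω ≤ 2 * (σ / Real.sqrt bk) := by
    calc 2 * α * ∑ ω, q ω * a ω ≤ 2 * 1 * ∑ ω, q ω * a ω := by
          apply mul_le_mul_of_nonneg_right _ hS0
          nlinarith
      _ = 2 * ∑ ω, q ω * a ω := by ring
      _ ≤ 2 * (σ / Real.sqrt bk) := by linarith
  linarith [h7, (by ring_nf : 2 * (σ / Real.sqrt bk) = 2 * σ / Real.sqrt bk)]
end
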